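/- Let (A,B,l_A,r_A,β,l_B,r_B,α) be a matched pair of Hom-Leibniz algebras (A,[·,·],α) and (B,{·,·},β). Then the direct sum A ⊕ B, equipped with the bracket [x+a, y+b]' = ([x,y] + l_B(a)y + r_B(b)x) + ({a,b} + l_A(x)b + r_A(y)a) and the linear map (α⊕β)(x+a) = α(x)+β(a), is a Hom-Leibniz algebra. -/
import Mathlib


/-- A Hom-Leibniz algebra structure. -/
def HomLeibniz {K A : Type*} [Field K] [AddCommGroup A] [Module K A]
    (br : A →ₗ[K] A →ₗ[K] A) (α : A →ₗ[K] A) : Prop :=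
  ∀ x y z : A, br (α x) (br y z) = br (br x y) (α z) + br (α y) (br x z)

/-- A bimodule `(l, r, β, V)` of a Hom-Leibniz algebra `(A, br, α)`. -/
def HomLeibnizBimodule {K A V : Type*} [Field K] [AddCommGroup A] [Module K A]
    [AddCommGroup V] [Module K V]
    (br : A →ₗ[K] A →ₗ[K] A) (α : A →ₗ[K] A)
    (l r : A →ₗ[K] V →ₗ[K] V) (β : V →ₗ[K] V) : Prop :=
  (∀ x y v, l (α x) (l y v) = l (br x y) (β v) + l (α y) (l x v)) ∧
  (∀ x y v, l (α x) (r y v) = r (α y) (l x v) + r (br x y) (β v)) ∧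
  (∀ x y v, r (br x y) (β v) = r (α y) (r x v) + l (α x) (r y v)) ∧
  (∀ x v, β (l x v) = l (α x) (β v)) ∧
  (∀ x v, β (r x v) = r (α x) (β v))

/-- A matched pair `(A, B, l_A, r_A, β, l_B, r_B, α)` of Hom-Leibniz algebras. -/
def HomLeibnizMatchedPair {K A B : Type*} [Field K] [AddCommGroup A] [Module K A]
    [AddCommGroup B] [Module K B]
    (brA : A →ₗ[K] A →ₗ[K] A) (αA : A →ₗ[K] A)
    (brB : B →ₗ[K] B →ₗ[K] B) (αB : B →ₗ[K] B)
    (lA rA : A →ₗ[K] B →ₗ[K] B) (lB rB : B →ₗ[K] A →ₗ[K] A) : Prop :=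
  HomLeibniz brA αA ∧ HomLeibniz brB αB ∧
  HomLeibnizBimodule brA αA lA rA αB ∧
  HomLeibnizBimodule brB αB lB rB αA ∧
  (∀ (x : A) (a b : B), lA (αA x) (brB a b) =
      lA (rB a x) (αB b) + rA (rB b x) (αB a) +
        brB (lA x a) (αB b) + brB (αB a) (lA x b)) ∧
  (∀ (x : A) (a b : B), brB (αB a) (lA x b) + rA (rB b x) (αB a) =
      brB (rA x a) (αB b) + lA (lB a x) (αB b) + lA (αA x) (brB a b)) ∧
  (∀ (x : A) (a b : B), brB (αB a) (rA x b) + rA (lB b x) (αB a) =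
      rA (αA x) (brB a b) + brB (αB b) (rA x a) + rA (lB a x) (αB b)) ∧
  (∀ (x y : A) (a : B), lB (αB a) (brA x y) =
      lB (rA x a) (αA y) + rB (rA y a) (αA x) +
        brA (lB a x) (αA y) + brA (αA x) (lB a y)) ∧
  (∀ (x y : A) (a : B), brA (αA x) (lB a y) + rB (rA y a) (αA x) =
      brA (rB a x) (αA y) + lB (lA x a) (αA y) + lB (αB a) (brA x y)) ∧
  (∀ (x y : A) (a : B), brA (αA x) (rB a y) + rB (lA y a) (αA x) =
      rB (αB a) (brA x y) + brA (αA y) (rB a x) + rB (lA x a) (αA y))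

/-- The bracket on `A ⊕ B` coming from a matched pair:
`[x+a, y+b]' = ([x,y] + l_B(a)y + r_B(b)x) + ({a,b} + l_A(x)b + r_A(y)a)`. -/
def mpBracket {K A B : Type*} [Field K] [AddCommGroup A] [Module K A]
    [AddCommGroup B] [Module K B]
    (brA : A →ₗ[K] A →ₗ[K] A) (brB : B →ₗ[K] B →ₗ[K] B)
    (lA rA : A →ₗ[K] B →ₗ[K] B) (lB rB : B →ₗ[K] A →ₗ[K] A) :
    A × B → A × B → A × B :=
  fun p q =>
    (brA p.1 q.1 + lB p.2 q.1 + rB q.2 p.1,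
     brB p.2 q.2 + lA p.1 q.2 + rA q.1 p.2)

/-- The map `α ⊕ β` on `A ⊕ B`. -/
def mpMap {K A B : Type*} [Field K] [AddCommGroup A] [Module K A]
    [AddCommGroup B] [Module K B]
    (αA : A →ₗ[K] A) (αB : B →ₗ[K] B) : A × B → A × B :=
  fun p => (αA p.1, αB p.2)

/-- a matched pair of Hom-Leibniz algebras yields a Hom-Leibniz
algebra structure on the direct sum `A ⊕ B`. -/
theorem homLeibniz_of_matchedPair
    {K A B : Type*} [Field K] [AddCommGroup A] [Module K A]
    [AddCommGroup B] [Module K B]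
    (brA : A →ₗ[K] A →ₗ[K] A) (αA : A →ₗ[K] A)
    (brB : B →ₗ[K] B →ₗ[K] B) (αB : B →ₗ[K] B)
    (lA rA : A →ₗ[K] B →ₗ[K] B) (lB rB : B →ₗ[K] A →ₗ[K] A)
    (h : HomLeibnizMatchedPair brA αA brB αB lA rA lB rB) :
    ∀ u w z : A × B,
      mpBracket brA brB lA rA lB rB (mpMap αA αB u)
          (mpBracket brA brB lA rA lB rB w z) =
        mpBracket brA brB lA rA lB rB
            (mpBracket brA brB lA rA lB rB u w) (mpMap αA αB z) +
          mpBracket brA brB lA rA lB rB (mpMap αA αB w)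
            (mpBracket brA brB lA rA lB rB u z) := by
  obtain ⟨hA, hB, ⟨a1, a2, a3, a4, a5⟩, ⟨b1, b2, b3, b4, b5⟩, m1, m2, m3, m4, m5, m6⟩ := h
  rintro ⟨x, a⟩ ⟨y, b⟩ ⟨z, c⟩
  simp only [mpBracket, mpMap, map_add, LinearMap.add_apply, Prod.mk_add_mk, Prod.mk.injEq]
  constructor
  · rw [hA x y z, eq_sub_of_add_eq (m5 x z b), eq_sub_of_add_eq (m6 x y c),
      m4 y z a, b1 a b z, b2 a c y, b3 b c x]
    abel
  · rw [hB a b c, eq_sub_of_add_eq (m2 y a c), eq_sub_of_add_eq (m3 z a b),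
      m1 x b c, a1 x y c, a2 x z b, a3 y z a]
    abel
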